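/- arXiv:2005.07330 — 2 statements merged into one kernel-verified Lean document; each statement's English description precedes it below -/
import Mathlib

section
/- Let p be a point with ‖p‖ = r_e and consider the sphere of radius r_k > r_e, both centered at the origin. The maximum distance from p to a point x on the sphere satisfying the line-of-sight condition ⟨x - p, p⟩ ≥ 0 (i.e., x is above the tangent plane to the earth at p) equals √(r_k² - r_e²) = √(2·r_e·a_k + a_k²), where a_k = r_k - r_e. -/
open MeasureTheory ProbabilityTheory Real
open scoped ENNReal RealInnerProductSpace

noncomputable abbrev E3 : Type := EuclideanSpace ℝ (Fin 3)

/-- Uniform (normalized 2-dimensional Hausdorff) probability measure on the sphere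
of radius `r` centered at the origin in `ℝ³`. -/
noncomputable def sphereUniform (r : ℝ) : Measure E3 :=
  (μH[2] (Metric.sphere (0 : E3) r))⁻¹ •
    (μH[2] : Measure E3).restrict (Metric.sphere (0 : E3) r)

lemma exists_unit_orthogonal (p : E3) (hp : p ≠ 0) : ∃ v : E3, ⟪p, v⟫ = 0 ∧ ‖v‖ = 1 := by
  have h1 : Module.finrank ℝ (ℝ ∙ p) = 1 := finrank_span_singleton hp
  have h2 : Module.finrank ℝ (ℝ ∙ p)ᗮ + 1 = 3 := by
    rw [← h1, add_comm, Submodule.finrank_add_finrank_orthogonal]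
    simp [finrank_euclideanSpace]
  have h3 : (ℝ ∙ p)ᗮ ≠ ⊥ := by
    intro h
    rw [h, finrank_bot] at h2
    omega
  obtain ⟨w, hw, hw0⟩ := Submodule.exists_mem_ne_zero_of_ne_bot h3
  refine ⟨‖w‖⁻¹ • w, ?_, ?_⟩
  · have := (Submodule.mem_orthogonal _ _).1 hw p (Submodule.mem_span_singleton_self p)
    rw [inner_smul_right, this, mul_zero]
  · simp [norm_smul, norm_ne_zero_iff.2 hw0]

theorem stmt_2 (re rk ak : ℝ) (hre : 0 < re) (hrk : re < rk) (hak : ak = rk - re)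
    (p : E3) (hp : ‖p‖ = re) :
    IsGreatest {d : ℝ | ∃ x : E3, ‖x‖ = rk ∧ 0 ≤ ⟪x - p, p⟫ ∧ d = ‖x - p‖}
      (Real.sqrt (rk ^ 2 - re ^ 2)) ∧
    Real.sqrt (rk ^ 2 - re ^ 2) = Real.sqrt (2 * re * ak + ak ^ 2) := by
  have hsub : (0:ℝ) ≤ rk ^ 2 - re ^ 2 := by nlinarith
  have hpne : p ≠ 0 := by
    intro h; rw [h, norm_zero] at hp; linarith
  constructor
  · constructor
    · -- membership
      obtain ⟨v, hpv, hv1⟩ := exists_unit_orthogonal p hpne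
      set t : ℝ := Real.sqrt (rk ^ 2 - re ^ 2) with ht
      refine ⟨p + t • v, ?_, ?_, ?_⟩
      · have : ‖p + t • v‖ ^ 2 = rk ^ 2 := by
          rw [norm_add_sq_real, inner_smul_right, hpv, norm_smul, hp, hv1]
          have : t ^ 2 = rk ^ 2 - re ^ 2 := Real.sq_sqrt hsub
          simp only [mul_zero, Real.norm_eq_abs, mul_one]
          rw [sq_abs]
          linarith
        have h1 : (0:ℝ) ≤ ‖p + t • v‖ := norm_nonneg _
        have h2 : (0:ℝ) ≤ rk := by linarith
        nlinarith [this]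
      · rw [add_sub_cancel_left, inner_smul_left, real_inner_comm, hpv]
        simp
      · rw [add_sub_cancel_left, norm_smul, hv1, mul_one, Real.norm_eq_abs,
          abs_of_nonneg (Real.sqrt_nonneg _)]
    · -- upper bound
      rintro d ⟨x, hx, hxp, rfl⟩
      have key : ‖x - p‖ ^ 2 ≤ rk ^ 2 - re ^ 2 := by
        have h1 : ‖x - p‖ ^ 2 = ‖x‖ ^ 2 - 2 * ⟪x, p⟫ + ‖p‖ ^ 2 :=
          norm_sub_sq_real x p
        have h2 : ⟪x - p, p⟫ = ⟪x, p⟫ - ⟪p, p⟫ := inner_sub_left x p p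
        have h3 : ⟪p, p⟫ = re ^ 2 := by
          rw [real_inner_self_eq_norm_sq, hp]
        nlinarith
      calc ‖x - p‖ = Real.sqrt (‖x - p‖ ^ 2) := by
            rw [Real.sqrt_sq (norm_nonneg _)]
        _ ≤ Real.sqrt (rk ^ 2 - re ^ 2) := Real.sqrt_le_sqrt key
  · congr 1
    rw [hak]; ring
end

section
/- Let r_e, r_i, r_k > 0 with r_e < min(r_i, r_k). Define d_max(k,i) = √(r_k² - r_e²) + √(r_i² - r_e²). Then d_max(k,i) is the maximum possible distance ‖x - y‖ over points x, y ∈ ℝ³ with ‖x‖ = r_k, ‖y‖ = r_i, subject to the segment from x to y not intersecting the open ball of radius r_e centered at the origin. -/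
open MeasureTheory ProbabilityTheory Real
open scoped ENNReal RealInnerProductSpace

/-
A chord of the shell between the spheres of radii `‖x‖` and `‖y‖` that avoids the open ball of
radius `r` is longest when it is tangent to that ball, in which case it splits at the point of
tangency into the two tangent segments, of lengths `√(‖x‖² - r²)` and `√(‖y‖² - r²)`.
For the upper bound, with `a`, `b` these tangent lengths, the point `(b • x + a • y) / (a + b)` of
the chord lies outside the ball; expanding its norm yields `r² ≤ ⟪x, y⟫ + a * b`, which is exactly
`‖x - y‖² ≤ (a + b)²`. For the lower bound, a chord in the plane `⟪·, v⟫ = r` tangent to the ball at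
`r • v` attains the value.
-/

section InnerProductSpace

variable {E : Type*} [NormedAddCommGroup E] [InnerProductSpace ℝ E]

theorem norm_sub_le_sqrt_add_sqrt_of_segment_notMem_ball {x y : E} {r : ℝ} (hr : 0 ≤ r)
    (hx : r < ‖x‖) (hy : r < ‖y‖) (hseg : ∀ z ∈ segment ℝ x y, z ∉ Metric.ball (0 : E) r) :
    ‖x - y‖ ≤ √(‖x‖ ^ 2 - r ^ 2) + √(‖y‖ ^ 2 - r ^ 2) := by
  set a := √(‖x‖ ^ 2 - r ^ 2)
  set b := √(‖y‖ ^ 2 - r ^ 2)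
  have ha : 0 < a := Real.sqrt_pos.2 (by nlinarith)
  have hb : 0 < b := Real.sqrt_pos.2 (by nlinarith)
  have ha2 : a ^ 2 = ‖x‖ ^ 2 - r ^ 2 := Real.sq_sqrt (by nlinarith)
  have hb2 : b ^ 2 = ‖y‖ ^ 2 - r ^ 2 := Real.sq_sqrt (by nlinarith)
  have hmem : (b / (a + b)) • x + (a / (a + b)) • y ∈ segment ℝ x y :=
    ⟨_, _, by positivity, by positivity, by field_simp; ring, rfl⟩
  have hfar : r * (a + b) ≤ ‖b • x + a • y‖ := by
    have h := hseg _ hmem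
    rw [Metric.mem_ball, dist_zero_right, not_lt] at h
    rwa [div_eq_inv_mul, div_eq_inv_mul, mul_smul, mul_smul, ← smul_add, norm_smul,
      Real.norm_of_nonneg (by positivity), le_inv_mul_iff₀ (by positivity), mul_comm] at h
  have hinner : r ^ 2 ≤ ⟪x, y⟫ + a * b := by
    have h := pow_le_pow_left₀ (by positivity) hfar 2
    rw [norm_add_sq_real, norm_smul, norm_smul, real_inner_smul_left, real_inner_smul_right,
      Real.norm_of_nonneg ha.le, Real.norm_of_nonneg hb.le] at h
    have hab : 0 < a * b := mul_pos ha hb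
    nlinarith
  have hsq : ‖x - y‖ ^ 2 ≤ (a + b) ^ 2 := by
    rw [norm_sub_sq_real]
    nlinarith
  exact (pow_le_pow_iff_left₀ (norm_nonneg _) (by positivity) two_ne_zero).1 hsq

theorem norm_smul_add_smul_of_inner_eq_zero {u v : E} (hu : ‖u‖ = 1) (hv : ‖v‖ = 1)
    (huv : ⟪u, v⟫ = 0) (s t : ℝ) : ‖s • u + t • v‖ = √(s ^ 2 + t ^ 2) := by
  have h := norm_add_sq_eq_norm_sq_add_norm_sq_real
    (by rw [real_inner_smul_left, real_inner_smul_right, huv, mul_zero, mul_zero] :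
      ⟪s • u, t • v⟫ = 0)
  rw [norm_smul, norm_smul, hu, hv] at h
  rw [eq_comm, Real.sqrt_eq_iff_mul_self_eq (by positivity) (norm_nonneg _), h]
  simp only [Real.norm_eq_abs, mul_one]
  rw [← sq, ← sq, sq_abs, sq_abs]

theorem inner_smul_add_smul_right_eq {u v : E} (hv : ‖v‖ = 1) (huv : ⟪u, v⟫ = 0) (s t : ℝ) :
    ⟪s • u + t • v, v⟫ = t := by
  rw [inner_add_left, real_inner_smul_left, real_inner_smul_left, huv,
    real_inner_self_eq_norm_sq, hv]
  ring

theorem segment_notMem_ball_of_inner_eq {v x y : E} {r : ℝ} (hv : ‖v‖ = 1)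
    (hx : ⟪x, v⟫ = r) (hy : ⟪y, v⟫ = r) : ∀ z ∈ segment ℝ x y, z ∉ Metric.ball (0 : E) r := by
  intro z hz
  have hplane : ⟪z, v⟫ = r :=
    (convex_hyperplane (innerₛₗ ℝ |>.flip v).isLinear r).segment_subset hx hy hz
  rw [Metric.mem_ball, dist_zero_right, not_lt, ← hplane]
  simpa [hv] using real_inner_le_norm z v

end InnerProductSpace

theorem stmt_12 (re ri rk : ℝ) (hre : 0 < re) (hri : re < ri) (hrk : re < rk) :
    IsGreatest {d : ℝ | ∃ x y : E3, ‖x‖ = rk ∧ ‖y‖ = ri ∧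
        (∀ z ∈ segment ℝ x y, z ∉ Metric.ball (0 : E3) re) ∧ d = ‖x - y‖}
      (Real.sqrt (rk ^ 2 - re ^ 2) + Real.sqrt (ri ^ 2 - re ^ 2)) := by
  refine ⟨?_, ?_⟩
  · set u : E3 := EuclideanSpace.basisFun (Fin 3) ℝ 0
    set v : E3 := EuclideanSpace.basisFun (Fin 3) ℝ 1
    have hu : ‖u‖ = 1 := (EuclideanSpace.basisFun (Fin 3) ℝ).orthonormal.1 0
    have hv : ‖v‖ = 1 := (EuclideanSpace.basisFun (Fin 3) ℝ).orthonormal.1 1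
    have huv : ⟪u, v⟫ = 0 := (EuclideanSpace.basisFun (Fin 3) ℝ).orthonormal.2 (by decide)
    have hnorm := norm_smul_add_smul_of_inner_eq_zero hu hv huv
    have hplane (s : ℝ) := inner_smul_add_smul_right_eq hv huv s re
    set a := √(rk ^ 2 - re ^ 2)
    set b := √(ri ^ 2 - re ^ 2)
    refine ⟨a • u + re • v, (-b) • u + re • v, ?_, ?_,
      segment_notMem_ball_of_inner_eq hv (hplane a) (hplane (-b)), ?_⟩
    · rw [hnorm, Real.sq_sqrt (by nlinarith), sub_add_cancel, Real.sqrt_sq (by linarith)]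
    · rw [hnorm, neg_sq, Real.sq_sqrt (by nlinarith), sub_add_cancel, Real.sqrt_sq (by linarith)]
    · rw [add_sub_add_right_eq_sub, ← sub_smul, sub_neg_eq_add, norm_smul, hu, mul_one,
        Real.norm_of_nonneg (by positivity)]
  · rintro d ⟨x, y, rfl, rfl, hseg, rfl⟩
    exact norm_sub_le_sqrt_add_sqrt_of_segment_notMem_ball hre.le hrk hri hseg
end
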